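/- Let e₁,…,e₈ be the standard basis of ℝ⁸ and let R = {±e_i ± e_j : 1 ≤ i < j ≤ 8} ∪ {(Σ_{i=1}^{8} ε_i e_i)/2 : ε_i ∈ {−1,+1}, ε₁ε₂⋯ε₈ = 1} (the root system of type E₈). Set β₀ = (e₁+⋯+e₈)/2 and β_{i,j} = β₀ − e_i − e_j for 1 ≤ i < j ≤ 8, and let Q = {β₀} ∪ {β_{i,j} : 1 ≤ i < j ≤ 8}. Then: (1) Q ∈ 𝔔(R); (2) Q is a maximal element of 𝔔(R) with respect to inclusion; (3) there exists a linear functional f : ℝ⁸ → ℝ with f(α) ∈ ℤ for every α ∈ R and f(α) odd for every α ∈ Q; (4) there is NO linear functional f : ℝ⁸ → ℝ with f(α) ∈ ℤ for every α ∈ R and f(α) ≡ 1 (mod 4) for every α ∈ Q. -/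
import Mathlib


/-- `Q ∈ 𝔔(R)`: (i) `Q ∩ (−Q) = ∅` and `α + β ∉ R` for all `α, β ∈ Q`;
(ii) every element of `R` is a ℤ-linear combination of elements of `Q`. -/
def MemQSet {V : Type*} [AddCommGroup V] (R Q : Set V) : Prop :=
  Q ⊆ R ∧ (∀ α ∈ Q, -α ∉ Q) ∧ (∀ α ∈ Q, ∀ β ∈ Q, α + β ∉ R) ∧
  (∀ γ ∈ R, γ ∈ Submodule.span ℤ Q)

/-- The standard basis vector `e i` of `ℝⁿ`. -/
def stdVec {n : ℕ} (i : Fin n) : Fin n → ℝ := Pi.single i 1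

/-- `s` is a sign, `s = ±1`. -/
def Sgn (s : ℝ) : Prop := s = 1 ∨ s = -1

/-- The root system of type `E₈` in `ℝ⁸`:
`{±e_i ± e_j : i < j} ∪ {½ Σ ε_i e_i : ε_i = ±1, ∏ ε_i = 1}`. -/
def rootsE8 : Set (Fin 8 → ℝ) :=
  {v | ∃ i j : Fin 8, i < j ∧ ∃ s t : ℝ, Sgn s ∧ Sgn t ∧
    v = s • stdVec i + t • stdVec j} ∪
  {v | ∃ ε : Fin 8 → ℝ, (∀ i, Sgn (ε i)) ∧ (∏ i, ε i) = 1 ∧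
    v = (1 / 2 : ℝ) • ∑ i, ε i • stdVec i}

/-- `β₀ = (e₁ + ⋯ + e₈)/2`. -/
noncomputable def betaZero : Fin 8 → ℝ := (1 / 2 : ℝ) • ∑ i, stdVec i

/-- `Q_{8,1,β₀} = {β₀} ∪ {β_{i,j} = β₀ − e_i − e_j : i < j}`. -/
def QE8 : Set (Fin 8 → ℝ) :=
  {betaZero} ∪ {v | ∃ i j : Fin 8, i < j ∧ v = betaZero - stdVec i - stdVec j}

open Finset in
section
noncomputable def bp (i j : Fin 8) : Fin 8 → ℝ := betaZero - stdVec i - stdVec j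

lemma stdVec_apply {n : ℕ} (i k : Fin n) : stdVec i k = if k = i then 1 else 0 := by
  simp [stdVec, Pi.single_apply]

lemma betaZero_apply (k : Fin 8) : betaZero k = 1/2 := by
  simp [betaZero, Finset.sum_apply, stdVec_apply]

lemma bp_apply (i j k : Fin 8) :
    bp i j k = 1/2 - (if k = i then 1 else 0) - (if k = j then 1 else 0) := by
  simp [bp, betaZero_apply, stdVec_apply]

lemma halfsum_apply (ε : Fin 8 → ℝ) (m : Fin 8) :
    ((1/2 : ℝ) • ∑ i, ε i • stdVec i) m = ε m / 2 := by
  simp [Finset.sum_apply, stdVec_apply, mul_ite]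
  ring

lemma typeA_apply (s t : ℝ) (i j m : Fin 8) :
    (s • stdVec i + t • stdVec j) m
      = (if m = i then s else 0) + (if m = j then t else 0) := by
  simp [stdVec_apply, mul_ite]

lemma bp_comm (i j : Fin 8) : bp i j = bp j i := by
  unfold bp; abel

lemma betaZero_mem_Q : betaZero ∈ QE8 := Or.inl rfl

lemma bp_mem_Q {i j : Fin 8} (h : i ≠ j) : bp i j ∈ QE8 := by
  rcases lt_or_gt_of_ne h with h' | h'
  · exact Or.inr ⟨i, j, h', rfl⟩
  · exact Or.inr ⟨j, i, h', (bp_comm i j)⟩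

lemma mem_Q_iff (v : Fin 8 → ℝ) :
    v ∈ QE8 ↔ v = betaZero ∨ ∃ i j : Fin 8, i < j ∧ v = bp i j := by
  rfl

lemma exists_third : ∀ i j : Fin 8, ∃ k : Fin 8, k ≠ i ∧ k ≠ j := by decide

lemma prod_two_neg {i j : Fin 8} (hij : i ≠ j) :
    ∏ k, (if k = i then (-1:ℝ) else if k = j then -1 else 1) = 1 := by
  rw [← Finset.mul_prod_erase Finset.univ _ (Finset.mem_univ i),
    ← Finset.mul_prod_erase _ _ (Finset.mem_erase.mpr ⟨hij.symm, Finset.mem_univ j⟩)]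
  rw [Finset.prod_eq_one]
  · simp [hij.symm]
  · intro k hk
    simp only [Finset.mem_erase] at hk
    simp [hk.1, hk.2.1]

lemma sum_coords_betaZero : ∑ k, betaZero k = 4 := by
  simp [betaZero_apply]; norm_num

lemma sum_coords_bp (i j : Fin 8) : ∑ k, bp i j k = 2 := by
  simp only [bp_apply]
  rw [Finset.sum_sub_distrib, Finset.sum_sub_distrib]
  simp [Finset.sum_ite_eq']
  norm_num

end

section
lemma Sgn.le_one {s : ℝ} (h : Sgn s) : s ≤ 1 := by rcases h with rfl | rfl <;> norm_num

lemma sum_typeA (s t : ℝ) (i j : Fin 8) :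
    ∑ k, (s • stdVec i + t • stdVec j) k = s + t := by
  simp only [typeA_apply]
  rw [Finset.sum_add_distrib]
  simp [Finset.sum_ite_eq']

lemma sum_halfsum (ε : Fin 8 → ℝ) :
    ∑ k, ((1/2 : ℝ) • ∑ i, ε i • stdVec i) k = (∑ k, ε k) / 2 := by
  simp only [halfsum_apply]
  rw [← Finset.sum_div]

lemma sum_sgn_le (ε : Fin 8 → ℝ) (hε : ∀ i, Sgn (ε i)) : ∑ k, ε k ≤ 8 := by
  calc ∑ k, ε k ≤ ∑ _k : Fin 8, (1:ℝ) := Finset.sum_le_sum fun k _ => (hε k).le_one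
  _ = 8 := by simp

lemma root_sum_le {v : Fin 8 → ℝ} (hv : v ∈ rootsE8) : ∑ k, v k ≤ 4 := by
  rcases hv with ⟨i, j, _, s, t, hs, ht, rfl⟩ | ⟨ε, hε, _, rfl⟩
  · rw [sum_typeA]; have := hs.le_one; have := ht.le_one; linarith
  · rw [sum_halfsum]; have := sum_sgn_le ε hε; linarith

lemma sgn_eq_one_of_sum {ε : Fin 8 → ℝ} (hε : ∀ i, Sgn (ε i))
    (h : ∑ k, ε k = 8) (i : Fin 8) : ε i = 1 := by
  rcases hε i with h1 | h1
  · exact h1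
  · exfalso
    have h2 : ∑ k ∈ Finset.univ.erase i, ε k ≤ 7 := by
      calc ∑ k ∈ Finset.univ.erase i, ε k ≤ ∑ _k ∈ Finset.univ.erase i, (1:ℝ) :=
        Finset.sum_le_sum fun k _ => (hε k).le_one
      _ = 7 := by simp [Finset.card_erase_of_mem]
    rw [← Finset.add_sum_erase _ _ (Finset.mem_univ i), h1] at h
    linarith

lemma halfsum_eq_betaZero {ε : Fin 8 → ℝ} (h : ∀ i, ε i = 1) :
    (1/2 : ℝ) • ∑ i, ε i • stdVec i = betaZero := by
  funext m
  rw [halfsum_apply, betaZero_apply, h m]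

lemma betaZero_mem_roots : betaZero ∈ rootsE8 := by
  refine Or.inr ⟨fun _ => 1, fun _ => Or.inl rfl, ?_, ?_⟩
  · simp
  · exact (halfsum_eq_betaZero fun _ => rfl).symm

lemma bp_eq_halfsum {i j : Fin 8} (hij : i ≠ j) :
    bp i j = (1/2 : ℝ) • ∑ k, (if k = i then (-1:ℝ) else if k = j then -1 else 1) • stdVec k := by
  funext m
  rw [bp_apply, halfsum_apply]
  by_cases h1 : m = i
  · subst h1
    rw [if_pos rfl, if_pos rfl, if_neg hij]
    norm_num
  · rw [if_neg h1, if_neg h1]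
    by_cases h2 : m = j <;> simp [h2] <;> norm_num

lemma bp_mem_roots {i j : Fin 8} (hij : i ≠ j) : bp i j ∈ rootsE8 := by
  refine Or.inr ⟨fun k => if k = i then (-1:ℝ) else if k = j then -1 else 1, ?_, ?_, ?_⟩
  · intro k
    show Sgn (if k = i then (-1:ℝ) else if k = j then -1 else 1)
    unfold Sgn; split_ifs <;> simp
  · exact prod_two_neg hij
  · exact bp_eq_halfsum hij

lemma Q_subset_roots : QE8 ⊆ rootsE8 := by
  intro v hv
  rcases (mem_Q_iff v).mp hv with rfl | ⟨i, j, hij, rfl⟩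
  · exact betaZero_mem_roots
  · exact bp_mem_roots hij.ne

lemma Q_sum (α : Fin 8 → ℝ) (hα : α ∈ QE8) : ∑ k, α k = 2 ∨ ∑ k, α k = 4 := by
  rcases (mem_Q_iff α).mp hα with rfl | ⟨i, j, _, rfl⟩
  · exact Or.inr sum_coords_betaZero
  · exact Or.inl (sum_coords_bp i j)

lemma Q_no_neg : ∀ α ∈ QE8, -α ∉ QE8 := by
  intro α hα hneg
  have h1 := Q_sum α hα
  have h2 := Q_sum (-α) hneg
  have : ∑ k, (-α) k = -∑ k, α k := by simp
  rw [this] at h2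
  rcases h1 with h1 | h1 <;> rcases h2 with h2 | h2 <;> linarith

lemma Q_no_sum : ∀ α ∈ QE8, ∀ β ∈ QE8, α + β ∉ rootsE8 := by
  intro α hα β hβ hmem
  have hsum : ∑ k, (α + β) k = ∑ k, α k + ∑ k, β k := by
    simp [Finset.sum_add_distrib]
  have hle := root_sum_le hmem
  rcases Q_sum α hα with h1 | h1; swap
  · rcases Q_sum β hβ with h2 | h2 <;> rw [hsum, h1, h2] at hle <;> linarith
  rcases Q_sum β hβ with h2 | h2; swap
  · rw [hsum, h1, h2] at hle; linarith
  -- both have coordinate sum 2, so both are bp's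
  obtain ⟨i, j, hij, rfl⟩ : ∃ i j : Fin 8, i < j ∧ α = bp i j := by
    rcases (mem_Q_iff α).mp hα with rfl | h
    · rw [sum_coords_betaZero] at h1; norm_num at h1
    · exact h
  obtain ⟨k, l, hkl, rfl⟩ : ∃ k l : Fin 8, k < l ∧ β = bp k l := by
    rcases (mem_Q_iff β).mp hβ with rfl | h
    · rw [sum_coords_betaZero] at h2; norm_num at h2
    · exact h
  -- the root has coordinate sum 4, hence is betaZero
  have heq : bp i j + bp k l = betaZero := by
    rcases hmem with ⟨a, b, _, s, t, hs, ht, hv⟩ | ⟨ε, hε, _, hv⟩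
    · exfalso
      have := congrArg (fun v => ∑ m, v m) hv
      simp only [sum_typeA] at this
      rw [hsum, h1, h2] at this
      have := hs.le_one; have := ht.le_one
      linarith
    · have h8 : ∑ m, ε m = 8 := by
        have := congrArg (fun v => ∑ m, v m) hv
        simp only [sum_halfsum] at this
        rw [hsum, h1, h2] at this
        linarith
      rw [hv, halfsum_eq_betaZero (sgn_eq_one_of_sum hε h8)]
  have := congrFun heq i
  simp only [Pi.add_apply, bp_apply, betaZero_apply, if_pos rfl, if_neg hij.ne] at this
  split_ifs at this <;> linarith

end

section
open Finset

lemma sum_stdVec_apply (S : Finset (Fin 8)) (m : Fin 8) :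
    (∑ i ∈ S, stdVec i) m = if m ∈ S then 1 else 0 := by
  simp [Finset.sum_apply, stdVec_apply, Finset.sum_ite_eq']

lemma pair_mem_span {i j : Fin 8} (hij : i ≠ j) :
    stdVec i + stdVec j ∈ Submodule.span ℤ QE8 := by
  have h : stdVec i + stdVec j = betaZero - bp i j := by unfold bp; abel
  rw [h]
  exact sub_mem (Submodule.subset_span betaZero_mem_Q) (Submodule.subset_span (bp_mem_Q hij))

lemma diff_mem_span {i j : Fin 8} (hij : i ≠ j) :
    stdVec i - stdVec j ∈ Submodule.span ℤ QE8 := by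
  obtain ⟨k, hki, hkj⟩ := exists_third i j
  have h : stdVec i - stdVec j = (stdVec i + stdVec k) - (stdVec j + stdVec k) := by abel
  rw [h]
  exact sub_mem (pair_mem_span (Ne.symm hki)) (pair_mem_span hkj.symm)

lemma even_sum_mem_span (S : Finset (Fin 8)) :
    Even S.card → (∑ i ∈ S, stdVec i) ∈ Submodule.span ℤ QE8 := by
  induction S using Finset.strongInduction with
  | _ S ih =>
    intro h
    rcases Finset.eq_empty_or_nonempty S with rfl | ⟨a, ha⟩
    · simp
    · have hcard : 1 ≤ S.card := Finset.card_pos.mpr ⟨a, ha⟩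
      have h2 : 2 ≤ S.card := by
        rcases h with ⟨m, hm⟩; omega
      have hb : (S.erase a).Nonempty := by
        rw [← Finset.card_pos, Finset.card_erase_of_mem ha]; omega
      obtain ⟨b, hb⟩ := hb
      have hba : b ≠ a := (Finset.mem_erase.mp hb).1
      have hbS : b ∈ S := (Finset.mem_erase.mp hb).2
      set S' := (S.erase a).erase b with hS'
      have hsub : S' ⊂ S :=
        _root_.ssubset_of_subset_of_ssubset ((Finset.erase_subset _ _)) (Finset.erase_ssubset ha)
      have hcard' : S'.card = S.card - 2 := by
        rw [hS', Finset.card_erase_of_mem hb, Finset.card_erase_of_mem ha]; omega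
      have heven' : Even S'.card := by
        rcases h with ⟨m, hm⟩; exact ⟨m - 1, by omega⟩
      have hmem := ih S' hsub heven'
      rw [← Finset.add_sum_erase _ _ ha, ← Finset.add_sum_erase _ _ hb, ← add_assoc]
      exact add_mem (pair_mem_span hba.symm) hmem

lemma even_card_neg {ε : Fin 8 → ℝ} (hε : ∀ i, Sgn (ε i)) (hprod : (∏ i, ε i) = 1) :
    Even (Finset.univ.filter (fun i => ε i = -1)).card := by
  have key : ((-1 : ℝ)) ^ (Finset.univ.filter (fun i => ε i = -1)).card = 1 := by
    have hsplit := Finset.prod_filter_mul_prod_filter_not Finset.univ (fun i => ε i = -1) ε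
    have h1 : ∏ i ∈ Finset.univ.filter (fun i => ε i = -1), ε i
        = (-1 : ℝ) ^ (Finset.univ.filter (fun i => ε i = -1)).card := by
      rw [Finset.prod_congr rfl (fun i hi => (Finset.mem_filter.mp hi).2), Finset.prod_const]
    have h2 : ∏ i ∈ Finset.univ.filter (fun i => ¬ ε i = -1), ε i = 1 := by
      apply Finset.prod_eq_one
      intro i hi
      rcases hε i with h | h
      · exact h
      · exact absurd h (Finset.mem_filter.mp hi).2
    rw [h1, h2, mul_one] at hsplit
    rw [hsplit, hprod]
  exact (neg_one_pow_eq_one_iff_even (by norm_num : (-1:ℝ) ≠ 1)).mp key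

lemma halfsum_eq_beta_sub {ε : Fin 8 → ℝ} (hε : ∀ i, Sgn (ε i)) :
    (1/2 : ℝ) • ∑ i, ε i • stdVec i
      = betaZero - ∑ i ∈ Finset.univ.filter (fun i => ε i = -1), stdVec i := by
  funext m
  rw [Pi.sub_apply, halfsum_apply, betaZero_apply, sum_stdVec_apply]
  rcases hε m with h | h <;> rw [h] <;> simp [h] <;> norm_num

lemma roots_subset_span : ∀ γ ∈ rootsE8, γ ∈ Submodule.span ℤ QE8 := by
  intro γ hγ
  rcases hγ with ⟨i, j, hij, s, t, hs, ht, rfl⟩ | ⟨ε, hε, hprod, rfl⟩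
  · rcases hs with rfl | rfl <;> rcases ht with rfl | rfl
    · rw [one_smul, one_smul]; exact pair_mem_span hij.ne
    · rw [one_smul, neg_one_smul, ← sub_eq_add_neg]; exact diff_mem_span hij.ne
    · rw [one_smul, neg_one_smul]
      have h : (-stdVec i) + stdVec j = -(stdVec i - stdVec j) := by abel
      rw [h]; exact neg_mem (diff_mem_span hij.ne)
    · rw [neg_one_smul, neg_one_smul]
      have h : (-stdVec i) + (-stdVec j) = -(stdVec i + stdVec j) := by abel
      rw [h]; exact neg_mem (pair_mem_span hij.ne)
  · rw [halfsum_eq_beta_sub hε]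
    exact sub_mem (Submodule.subset_span betaZero_mem_Q)
      (even_sum_mem_span _ (even_card_neg hε hprod))

lemma memQSet_QE8 : MemQSet rootsE8 QE8 :=
  ⟨Q_subset_roots, Q_no_neg, Q_no_sum, roots_subset_span⟩

end

section
open Finset

lemma pair_mem_roots {c d : Fin 8} (h : c ≠ d) : stdVec c + stdVec d ∈ rootsE8 := by
  rcases lt_or_gt_of_ne h with h' | h'
  · exact Or.inl ⟨c, d, h', 1, 1, Or.inl rfl, Or.inl rfl, by rw [one_smul, one_smul]⟩
  · exact Or.inl ⟨d, c, h', 1, 1, Or.inl rfl, Or.inl rfl, by rw [one_smul, one_smul]; abel⟩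

lemma sum_univ_stdVec : ∑ i, stdVec i = betaZero + betaZero := by
  funext m
  rw [Pi.add_apply, betaZero_apply, sum_stdVec_apply]
  norm_num

lemma maximal_QE8 : ∀ Q' : Set (Fin 8 → ℝ), MemQSet rootsE8 Q' → QE8 ⊆ Q' → Q' = QE8 := by
  intro Q' hQ' hQsub
  obtain ⟨hsub, hneg, hsum, -⟩ := hQ'
  apply Set.eq_of_subset_of_subset _ hQsub
  intro γ hγ
  rcases hsub hγ with ⟨i, j, hij, s, t, hs, ht, heq⟩ | ⟨ε, hε, hprod, heq⟩
  · exfalso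
    rcases hs with rfl | rfl <;> rcases ht with rfl | rfl
    · -- γ = e_i + e_j
      have hmem : γ + bp i j ∈ rootsE8 := by
        have h : γ + bp i j = betaZero := by
          rw [heq, one_smul, one_smul]; unfold bp; abel
        rw [h]; exact betaZero_mem_roots
      exact hsum γ hγ _ (hQsub (bp_mem_Q hij.ne)) hmem
    · -- γ = e_i - e_j
      obtain ⟨k, hki, hkj⟩ := exists_third i j
      have hmem : γ + bp i k ∈ rootsE8 := by
        have h : γ + bp i k = bp j k := by
          rw [heq, one_smul, neg_one_smul]; unfold bp; abel
        rw [h]; exact bp_mem_roots (Ne.symm hkj)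
      exact hsum γ hγ _ (hQsub (bp_mem_Q (Ne.symm hki))) hmem
    · -- γ = -e_i + e_j
      obtain ⟨k, hki, hkj⟩ := exists_third i j
      have hmem : γ + bp j k ∈ rootsE8 := by
        have h : γ + bp j k = bp i k := by
          rw [heq, one_smul, neg_one_smul]; unfold bp; abel
        rw [h]; exact bp_mem_roots (Ne.symm hki)
      exact hsum γ hγ _ (hQsub (bp_mem_Q (Ne.symm hkj))) hmem
    · -- γ = -e_i - e_j
      have hmem : γ + betaZero ∈ rootsE8 := by
        have h : γ + betaZero = bp i j := by
          rw [heq, neg_one_smul, neg_one_smul]; unfold bp; abel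
        rw [h]; exact bp_mem_roots hij.ne
      exact hsum γ hγ _ (hQsub betaZero_mem_Q) hmem
  · set S : Finset (Fin 8) := Finset.univ.filter (fun i => ε i = -1) with hSdef
    have heqγ : γ = betaZero - ∑ i ∈ S, stdVec i := by
      rw [heq]; exact halfsum_eq_beta_sub hε
    have heven : Even S.card := even_card_neg hε hprod
    have hle : S.card ≤ 8 := le_trans (Finset.card_le_univ S) (by simp)
    obtain ⟨m, hm⟩ := heven
    have hm4 : m ≤ 4 := by omega
    have hT : (Finset.univ \ S).card = 8 - S.card := by
      rw [Finset.card_sdiff_of_subset (Finset.subset_univ S)]; simp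
    have h1 : ∑ i ∈ Finset.univ \ S, stdVec i + ∑ i ∈ S, stdVec i = ∑ i, stdVec i :=
      Finset.sum_sdiff (Finset.subset_univ S)
    interval_cases m
    · -- S empty, γ = β₀
      have hS : S = ∅ := Finset.card_eq_zero.mp (by omega)
      left
      rw [heqγ, hS]
      simp
    · -- |S| = 2, γ = bp a b
      obtain ⟨a, b, hab, hS⟩ := Finset.card_eq_two.mp (show S.card = 2 by omega)
      have : γ = bp a b := by
        rw [heqγ, hS, Finset.sum_pair hab]; unfold bp; abel
      rw [this]
      exact bp_mem_Q hab
    · -- |S| = 4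
      exfalso
      have hT4 : (Finset.univ \ S).card = 4 := by omega
      obtain ⟨a, ha, b, hb, hab⟩ := Finset.one_lt_card.mp (show 1 < (Finset.univ \ S).card by omega)
      have hbe : b ∈ (Finset.univ \ S).erase a := Finset.mem_erase.mpr ⟨Ne.symm hab, hb⟩
      set T' := ((Finset.univ \ S).erase a).erase b with hT'
      have hT'card : T'.card = 2 := by
        rw [hT', Finset.card_erase_of_mem hbe, Finset.card_erase_of_mem ha]; omega
      obtain ⟨c, d, hcd, hT'eq⟩ := Finset.card_eq_two.mp hT'card
      have h2 : ∑ i ∈ Finset.univ \ S, stdVec i = stdVec a + (stdVec b + ∑ i ∈ T', stdVec i) := by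
        rw [← Finset.add_sum_erase _ _ ha, ← Finset.add_sum_erase _ _ hbe]
      have h3 : ∑ i ∈ T', stdVec i = stdVec c + stdVec d := by
        rw [hT'eq, Finset.sum_pair hcd]
      have hS' : ∑ i ∈ S, stdVec i
          = betaZero + betaZero - (stdVec a + (stdVec b + (stdVec c + stdVec d))) := by
        rw [← sum_univ_stdVec, ← h1, h2, h3]; abel
      have hmem : γ + bp a b ∈ rootsE8 := by
        have h : γ + bp a b = stdVec c + stdVec d := by
          rw [heqγ, hS']; unfold bp; abel
        rw [h]; exact pair_mem_roots hcd
      exact hsum γ hγ _ (hQsub (bp_mem_Q hab)) hmem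
    · -- |S| = 6
      exfalso
      obtain ⟨c, d, hcd, hTeq⟩ := Finset.card_eq_two.mp (show (Finset.univ \ S).card = 2 by omega)
      have hS' : ∑ i ∈ S, stdVec i = betaZero + betaZero - (stdVec c + stdVec d) := by
        rw [← sum_univ_stdVec, ← h1, hTeq, Finset.sum_pair hcd]; abel
      have hmem : γ + betaZero ∈ rootsE8 := by
        have h : γ + betaZero = stdVec c + stdVec d := by
          rw [heqγ, hS']; abel
        rw [h]; exact pair_mem_roots hcd
      exact hsum γ hγ _ (hQsub betaZero_mem_Q) hmem
    · -- |S| = 8, γ = -β₀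
      exfalso
      have hS : S = Finset.univ := Finset.eq_univ_of_card S (by simp; omega)
      have hγeq : γ = -betaZero := by
        rw [heqγ, hS, sum_univ_stdVec]; abel
      have hmem : -betaZero ∈ Q' := hγeq ▸ hγ
      exact hneg betaZero (hQsub betaZero_mem_Q) hmem

end

section
open Finset

noncomputable def cE8 : Fin 8 → ℝ := fun k => if k = 7 then 3 else 1

def czE8 : Fin 8 → ℤ := fun k => if k = 7 then 3 else 1

lemma cE8_cast (k : Fin 8) : cE8 k = ((czE8 k : ℤ) : ℝ) := by
  unfold cE8 czE8; split_ifs <;> norm_num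

noncomputable def fE8 : (Fin 8 → ℝ) →ₗ[ℝ] ℝ where
  toFun v := ∑ k, cE8 k * v k
  map_add' v w := by simp [mul_add, Finset.sum_add_distrib]
  map_smul' r v := by simp [Finset.mul_sum]; ring_nf; simp [mul_comm, mul_assoc, mul_left_comm]

lemma fE8_std (i : Fin 8) : fE8 (stdVec i) = cE8 i := by
  show ∑ k, cE8 k * stdVec i k = cE8 i
  simp [stdVec_apply, mul_ite, Finset.sum_ite_eq']

lemma sum_cE8 : ∑ k, cE8 k = 10 := by
  simp [cE8, Fin.sum_univ_eight]
  norm_num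

lemma fE8_betaZero : fE8 betaZero = 5 := by
  show fE8 ((1/2 : ℝ) • ∑ i, stdVec i) = 5
  rw [map_smul, map_sum]
  simp only [fE8_std, smul_eq_mul, sum_cE8]
  norm_num

lemma fE8_bp (i j : Fin 8) : fE8 (bp i j) = 5 - cE8 i - cE8 j := by
  unfold bp
  rw [map_sub, map_sub, fE8_betaZero, fE8_std, fE8_std]

lemma fE8_int_on_roots : ∀ α ∈ rootsE8, ∃ m : ℤ, fE8 α = (m : ℝ) := by
  intro α hα
  rcases hα with ⟨i, j, _, s, t, hs, ht, rfl⟩ | ⟨ε, hε, _, rfl⟩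
  · have hf : fE8 (s • stdVec i + t • stdVec j) = s * cE8 i + t * cE8 j := by
      rw [map_add, map_smul, map_smul, fE8_std, fE8_std, smul_eq_mul, smul_eq_mul]
    rcases hs with rfl | rfl <;> rcases ht with rfl | rfl
    · exact ⟨czE8 i + czE8 j, by rw [hf, cE8_cast i, cE8_cast j]; push_cast; ring⟩
    · exact ⟨czE8 i - czE8 j, by rw [hf, cE8_cast i, cE8_cast j]; push_cast; ring⟩
    · exact ⟨czE8 j - czE8 i, by rw [hf, cE8_cast i, cE8_cast j]; push_cast; ring⟩
    · exact ⟨-czE8 i - czE8 j, by rw [hf, cE8_cast i, cE8_cast j]; push_cast; ring⟩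
  · set S : Finset (Fin 8) := Finset.univ.filter (fun k => ε k = -1) with hS
    have hf : fE8 ((1/2 : ℝ) • ∑ k, ε k • stdVec k) = (∑ k, ε k * cE8 k) / 2 := by
      rw [map_smul, map_sum]
      simp only [map_smul, fE8_std, smul_eq_mul]
      ring
    have e1 : ∑ k ∈ S, ε k * cE8 k = - ∑ k ∈ S, cE8 k := by
      rw [← Finset.sum_neg_distrib]
      exact Finset.sum_congr rfl fun k hk => by
        rw [(Finset.mem_filter.mp hk).2]; ring
    have e2 : ∑ k ∈ Finset.univ.filter (fun k => ¬ ε k = -1), ε k * cE8 k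
        = ∑ k ∈ Finset.univ.filter (fun k => ¬ ε k = -1), cE8 k := by
      exact Finset.sum_congr rfl fun k hk => by
        rcases hε k with h | h
        · rw [h]; ring
        · exact absurd h (Finset.mem_filter.mp hk).2
    have e3 := Finset.sum_filter_add_sum_filter_not Finset.univ (fun k => ε k = -1)
      (fun k => ε k * cE8 k)
    have e4 := Finset.sum_filter_add_sum_filter_not Finset.univ (fun k => ε k = -1) cE8
    have hsplit : ∑ k, ε k * cE8 k = 10 - 2 * ∑ k ∈ S, cE8 k := by
      rw [← e3, e1, e2]
      rw [sum_cE8] at e4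
      linarith
    refine ⟨5 - ∑ k ∈ S, czE8 k, ?_⟩
    rw [hf, hsplit]
    have : ∑ k ∈ S, cE8 k = ((∑ k ∈ S, czE8 k : ℤ) : ℝ) := by
      rw [Int.cast_sum]
      exact Finset.sum_congr rfl fun k _ => cE8_cast k
    rw [this]
    push_cast
    ring

lemma fE8_odd_on_Q : ∀ α ∈ QE8, ∃ m : ℤ, fE8 α = ((2 * m + 1 : ℤ) : ℝ) := by
  intro α hα
  rcases (mem_Q_iff α).mp hα with rfl | ⟨i, j, hij, rfl⟩
  · exact ⟨2, by rw [fE8_betaZero]; norm_num⟩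
  · have hne : i ≠ j := hij.ne
    by_cases hi : i = (7 : Fin 8)
    · have hj : j ≠ (7 : Fin 8) := fun h => hne (hi.trans h.symm)
      exact ⟨0, by rw [fE8_bp]; simp [cE8, hi, hj]; norm_num⟩
    · by_cases hj : j = (7 : Fin 8)
      · exact ⟨0, by rw [fE8_bp]; simp [cE8, hi, hj]; norm_num⟩
      · exact ⟨1, by rw [fE8_bp]; simp [cE8, hi, hj]; norm_num⟩

end

section

lemma bp_pairing_identity :
    bp 0 1 + bp 2 3 + bp 4 5 + bp 6 7 = betaZero + betaZero := by
  have hsum : stdVec 0 + stdVec 1 + stdVec 2 + stdVec 3 + stdVec 4 + stdVec 5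
      + stdVec 6 + stdVec 7 = betaZero + betaZero := by
    rw [← sum_univ_stdVec, Fin.sum_univ_eight]
  unfold bp
  have h : betaZero - stdVec 0 - stdVec 1 + (betaZero - stdVec 2 - stdVec 3)
      + (betaZero - stdVec 4 - stdVec 5) + (betaZero - stdVec 6 - stdVec 7)
      = betaZero + betaZero + (betaZero + betaZero)
        - (stdVec 0 + stdVec 1 + stdVec 2 + stdVec 3 + stdVec 4 + stdVec 5
          + stdVec 6 + stdVec 7) := by abel
  rw [h, hsum]
  abel

lemma no_weak_J :
    ¬ (∃ f : (Fin 8 → ℝ) →ₗ[ℝ] ℝ, (∀ α ∈ rootsE8, ∃ m : ℤ, f α = (m : ℝ)) ∧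
      (∀ α ∈ QE8, ∃ m : ℤ, f α = ((4 * m + 1 : ℤ) : ℝ))) := by
  rintro ⟨f, -, hQ⟩
  obtain ⟨m0, h0⟩ := hQ betaZero betaZero_mem_Q
  obtain ⟨a, h1⟩ := hQ (bp 0 1) (bp_mem_Q (by decide))
  obtain ⟨b, h2⟩ := hQ (bp 2 3) (bp_mem_Q (by decide))
  obtain ⟨c, h3⟩ := hQ (bp 4 5) (bp_mem_Q (by decide))
  obtain ⟨d, h4⟩ := hQ (bp 6 7) (bp_mem_Q (by decide))
  have hid := congrArg f bp_pairing_identity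
  rw [map_add, map_add, map_add, map_add, h1, h2, h3, h4, h0] at hid
  have hz : (4 * a + 1) + (4 * b + 1) + (4 * c + 1) + (4 * d + 1)
      = (4 * m0 + 1) + (4 * m0 + 1) := by exact_mod_cast hid
  omega

end

/-- The set `Q_{8,1,β₀}` of the paper: it belongs to `𝔔(R)` for `R` of type
`E₈`, is maximal there, is CR-symmetric (admits a linear functional integral on
`R` and odd on `Q`), but does not have the weak-J-property (admits no linear
functional integral on `R` and `≡ 1 mod 4` on `Q`). -/
theorem stmt_19 :
    MemQSet rootsE8 QE8 ∧
    (∀ Q' : Set (Fin 8 → ℝ), MemQSet rootsE8 Q' → QE8 ⊆ Q' → Q' = QE8) ∧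
    (∃ f : (Fin 8 → ℝ) →ₗ[ℝ] ℝ, (∀ α ∈ rootsE8, ∃ m : ℤ, f α = (m : ℝ)) ∧
      (∀ α ∈ QE8, ∃ m : ℤ, f α = ((2 * m + 1 : ℤ) : ℝ))) ∧
    ¬ (∃ f : (Fin 8 → ℝ) →ₗ[ℝ] ℝ, (∀ α ∈ rootsE8, ∃ m : ℤ, f α = (m : ℝ)) ∧
      (∀ α ∈ QE8, ∃ m : ℤ, f α = ((4 * m + 1 : ℤ) : ℝ))) :=
  ⟨memQSet_QE8, maximal_QE8, ⟨fE8, fE8_int_on_roots, fE8_odd_on_Q⟩, no_weak_J⟩
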